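/- arXiv:0912.5178 — 2 statements merged into one kernel-verified Lean document; each statement's English description precedes it below -/
import Mathlib

section
/- Assume L is a locally continuous frame, ℰ is a paving on E, and ν, τ are L-valued maxitive measures on ℰ. Then ν ⊕ τ (pointwise join) is a maxitive measure on ℰ and the following calculus rules hold: ⌊ν ⊕ τ⌋ = ⌊ν⌋ ⊕ ⌊τ⌋, (ν ⊕ τ)* = ν* ⊕ τ* on ℰ*, and ⊥(ν ⊕ τ) ≤ ⊥ν ⊕ ⊥τ pointwise. -/
open Set

variable {E L : Type*}

/-- A prepaving on `E`: a collection of subsets containing `∅` and closed under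
(binary, hence finite) unions. -/
def IsPrepaving (ℰ : Set (Set E)) : Prop :=
  ∅ ∈ ℰ ∧ ∀ A ∈ ℰ, ∀ B ∈ ℰ, A ∪ B ∈ ℰ

/-- A paving on `E`: a prepaving covering `E` such that, for every `x`, the
collection `{G ∈ ℰ : x ∈ G}` is nonempty and filtered under inclusion. -/
def IsPaving (ℰ : Set (Set E)) : Prop :=
  IsPrepaving ℰ ∧ ∀ x : E, (∃ G ∈ ℰ, x ∈ G) ∧
    ∀ G ∈ ℰ, x ∈ G → ∀ G' ∈ ℰ, x ∈ G' → ∃ H ∈ ℰ, x ∈ H ∧ H ⊆ G ∧ H ⊆ G'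

/-- An ideal of the prepaving `ℰ`: a nonempty subset of `ℰ` closed under finite
unions and downward closed (within `ℰ`). -/
def IsIdealOf (ℰ 𝓘 : Set (Set E)) : Prop :=
  𝓘.Nonempty ∧ 𝓘 ⊆ ℰ ∧ (∀ A ∈ 𝓘, ∀ B ∈ 𝓘, A ∪ B ∈ 𝓘) ∧
    ∀ A ∈ ℰ, ∀ B ∈ 𝓘, A ⊆ B → A ∈ 𝓘

/-- A filter of a poset: a nonempty, (downward) filtered, upward-closed subset. -/
def IsFilterSet [PartialOrder L] (F : Set L) : Prop :=
  F.Nonempty ∧ (∀ x ∈ F, ∀ y ∈ F, ∃ z ∈ F, z ≤ x ∧ z ≤ y) ∧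
    ∀ x ∈ F, ∀ y : L, x ≤ y → y ∈ F

/-- `y` is way-above `x`: for every filter `F` possessing an infimum `a`,
`a ≤ x` implies `y ∈ F`. -/
def WayAbove [PartialOrder L] (y x : L) : Prop :=
  ∀ F : Set L, IsFilterSet F → ∀ a : L, IsGLB F a → a ≤ x → y ∈ F

/-- A continuous poset: for every `x`, `↟x = {y : y ≫ x}` is a filter with
infimum `x`. -/
def ContinuousPoset (L : Type*) [PartialOrder L] : Prop :=
  ∀ x : L, IsFilterSet {y : L | WayAbove y x} ∧ IsGLB {y : L | WayAbove y x} x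

/-- A domain: a continuous poset in which every filter has an infimum. -/
def DomainPoset (L : Type*) [PartialOrder L] : Prop :=
  ContinuousPoset L ∧ ∀ F : Set L, IsFilterSet F → ∃ a : L, IsGLB F a

/-- A locally complete poset: every upper-bounded subset has a supremum. -/
def LocallyComplete (L : Type*) [PartialOrder L] : Prop :=
  ∀ S : Set L, BddAbove S → ∃ a : L, IsLUB S a

/-- A maxitive measure on `ℰ`: `ν ∅ = 0`, and for every finite family of
elements of `ℰ` whose union lies in `ℰ`, the supremum of the values exists and
equals the value of the union. -/
def IsMaxitive [PartialOrder L] [OrderBot L] (ℰ : Set (Set E)) (ν : Set E → L) : Prop :=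
  ν ∅ = ⊥ ∧ ∀ S : Finset (Set E), (∀ G ∈ S, G ∈ ℰ) → ⋃₀ (S : Set (Set E)) ∈ ℰ →
    IsLUB (ν '' (S : Set (Set E))) (ν (⋃₀ (S : Set (Set E))))

/-- A completely maxitive measure on `ℰ`: as above, but for arbitrary families. -/
def IsCompletelyMaxitive [PartialOrder L] [OrderBot L] (ℰ : Set (Set E)) (ν : Set E → L) : Prop :=
  ν ∅ = ⊥ ∧ ∀ 𝒢 : Set (Set E), 𝒢 ⊆ ℰ → ⋃₀ 𝒢 ∈ ℰ →
    IsLUB (ν '' 𝒢) (ν (⋃₀ 𝒢))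

open Classical in
/-- The infimum of `S` when it exists, `⊥` otherwise. -/
noncomputable def pInf [PartialOrder L] [OrderBot L] (S : Set L) : L :=
  if h : ∃ a : L, IsGLB S a then h.choose else ⊥

open Classical in
/-- The supremum of `S` when it exists, `⊥` otherwise. -/
noncomputable def pSup [PartialOrder L] [OrderBot L] (S : Set L) : L :=
  if h : ∃ a : L, IsLUB S a then h.choose else ⊥

/-- `ℰ*`: the collection of subsets `A` of `E` such that `{G ∈ ℰ : A ⊆ G}` is
nonempty and filtered under inclusion. -/
def EStar (ℰ : Set (Set E)) : Set (Set E) :=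
  {A | (∃ G ∈ ℰ, A ⊆ G) ∧
    ∀ G ∈ ℰ, A ⊆ G → ∀ G' ∈ ℰ, A ⊆ G' → ∃ H ∈ ℰ, A ⊆ H ∧ H ⊆ G ∧ H ⊆ G'}

/-- The extension `ν*` of `ν`: `ν*(A) = ⋀ {ν G : G ∈ ℰ, A ⊆ G}`. -/
noncomputable def nuStar [PartialOrder L] [OrderBot L] (ℰ : Set (Set E))
    (ν : Set E → L) (A : Set E) : L :=
  pInf (ν '' {G ∈ ℰ | A ⊆ G})

/-- `𝒦`: the compact subsets of `E` for the topology generated by `ℰ`. -/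
def Kpt (ℰ : Set (Set E)) : Set (Set E) :=
  {K | @IsCompact E (TopologicalSpace.generateFrom ℰ) K}

/-- `ℱ = {F ⊆ E : F ∈ ℰ* and Fᶜ ∈ ℰ}`. -/
def Fcl (ℰ : Set (Set E)) : Set (Set E) :=
  {F | F ∈ EStar ℰ ∧ Fᶜ ∈ ℰ}

/-- `ℋ = 𝒦 ∩ ℱ`. -/
def Hcf (ℰ : Set (Set E)) : Set (Set E) := Kpt ℰ ∩ Fcl ℰ

/-- The regular part `⌊ν⌋(G) = ⊕ {ν*(K) : K ∈ 𝒦, K ⊆ G}`. -/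
noncomputable def regPart [PartialOrder L] [OrderBot L] (ℰ : Set (Set E))
    (ν : Set E → L) (G : Set E) : L :=
  pSup (nuStar ℰ ν '' {K ∈ Kpt ℰ | K ⊆ G})

/-- `r` is the residual part of `ν`: the smallest maxitive measure such that
`ν = ⌊ν⌋ ⊕ r` on `ℰ`. -/
def IsResidualPart [Lattice L] [OrderBot L] (ℰ : Set (Set E)) (ν r : Set E → L) : Prop :=
  IsMaxitive ℰ r ∧ (∀ G ∈ ℰ, ν G = regPart ℰ ν G ⊔ r G) ∧
    ∀ τ : Set E → L, IsMaxitive ℰ τ → (∀ G ∈ ℰ, ν G = regPart ℰ ν G ⊔ τ G) →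
      ∀ G ∈ ℰ, r G ≤ τ G
section MyAux

variable {E L : Type*}

lemma myIsLUB_image_sup [DistribLattice L] {f g : Set E → L} {S : Set (Set E)} {a b : L}
    (hf : IsLUB (f '' S) a) (hg : IsLUB (g '' S) b) :
    IsLUB ((fun G => f G ⊔ g G) '' S) (a ⊔ b) := by
  constructor
  · rintro _ ⟨G, hG, rfl⟩
    exact sup_le_sup (hf.1 ⟨G, hG, rfl⟩) (hg.1 ⟨G, hG, rfl⟩)
  · intro c hc
    refine sup_le (hf.2 ?_) (hg.2 ?_)
    · rintro _ ⟨G, hG, rfl⟩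
      exact le_trans le_sup_left (hc ⟨G, hG, rfl⟩)
    · rintro _ ⟨G, hG, rfl⟩
      exact le_trans le_sup_right (hc ⟨G, hG, rfl⟩)

lemma myMaxitive_sup [DistribLattice L] [OrderBot L] {ℰ : Set (Set E)} {ν τ : Set E → L}
    (hν : IsMaxitive ℰ ν) (hτ : IsMaxitive ℰ τ) :
    IsMaxitive ℰ (fun G => ν G ⊔ τ G) := by
  refine ⟨by simp [hν.1, hτ.1], fun S hS hU => ?_⟩
  exact myIsLUB_image_sup (hν.2 S hS hU) (hτ.2 S hS hU)

lemma myExists_isGLB [PartialOrder L] [OrderBot L] (hlc : LocallyComplete L)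
    {S : Set L} (hS : S.Nonempty) : ∃ a : L, IsGLB S a := by
  obtain ⟨s, hs⟩ := hS
  obtain ⟨a, ha⟩ := hlc (lowerBounds S) ⟨s, fun x hx => hx hs⟩
  exact ⟨a, fun x hx => ha.2 (fun y hy => hy hx), ha.1⟩

lemma myPInf_eq [PartialOrder L] [OrderBot L] {S : Set L} {a : L} (h : IsGLB S a) :
    pInf S = a := by
  have he : ∃ b : L, IsGLB S b := ⟨a, h⟩
  rw [pInf, dif_pos he]
  exact he.choose_spec.unique h

lemma myPSup_eq [PartialOrder L] [OrderBot L] {S : Set L} {a : L} (h : IsLUB S a) :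
    pSup S = a := by
  have he : ∃ b : L, IsLUB S b := ⟨a, h⟩
  rw [pSup, dif_pos he]
  exact he.choose_spec.unique h

lemma myWayAbove_le [PartialOrder L] {y x : L} (h : WayAbove y x) : x ≤ y :=
  h {z | x ≤ z} ⟨⟨x, le_refl x⟩, fun u hu v hv => ⟨x, le_refl x, hu, hv⟩,
      fun u hu v huv => le_trans hu huv⟩ x
    ⟨fun z hz => hz, fun z hz => hz (le_refl x)⟩ (le_refl x)

lemma myIsGLB_sup_of_filter [DistribLattice L] (hc : ContinuousPoset L)
    {F : Set L} (hF : IsFilterSet F) {a : L} (ha : IsGLB F a) (x : L) :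
    IsGLB ((fun f => x ⊔ f) '' F) (x ⊔ a) := by
  constructor
  · rintro _ ⟨f, hf, rfl⟩
    exact sup_le_sup_left (ha.1 hf) x
  · intro b hb
    refine (hc (x ⊔ a)).2.2 ?_
    intro y hy
    have hyF : y ∈ F := hy F hF a ha le_sup_right
    have hxy : x ⊔ a ≤ y := myWayAbove_le hy
    calc b ≤ x ⊔ y := hb ⟨y, hyF, rfl⟩
    _ = y := sup_eq_right.mpr (le_trans le_sup_left hxy)

lemma myMaxitive_mono [PartialOrder L] [OrderBot L] {ℰ : Set (Set E)} {ν : Set E → L}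
    (hpre : IsPrepaving ℰ) (hν : IsMaxitive ℰ ν) {G G' : Set E}
    (hG : G ∈ ℰ) (hG' : G' ∈ ℰ) (hsub : G ⊆ G') : ν G ≤ ν G' := by
  classical
  have hU : ⋃₀ (↑({G, G'} : Finset (Set E)) : Set (Set E)) = G' := by
    simp [Set.union_eq_right.mpr hsub]
  have h := hν.2 {G, G'} (by
      intro X hX
      simp only [Finset.mem_insert, Finset.mem_singleton] at hX
      rcases hX with rfl | rfl <;> assumption) (by rw [hU]; exact hG')
  rw [hU] at h
  exact h.1 ⟨G, by simp, rfl⟩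

lemma myPrepaving_biUnion {ℰ : Set (Set E)} (h : IsPrepaving ℰ) {ι : Type*}
    (t : Finset ι) (f : ι → Set E) (hf : ∀ i ∈ t, f i ∈ ℰ) : (⋃ i ∈ t, f i) ∈ ℰ := by
  classical
  induction t using Finset.induction_on with
  | empty => simpa using h.1
  | @insert a s has ih =>
    rw [Finset.set_biUnion_insert]
    exact h.2 _ (hf a (Finset.mem_insert_self a s)) _
      (ih fun i hi => hf i (Finset.mem_insert_of_mem hi))

lemma myKpt_subset_estar {ℰ : Set (Set E)} (hpav : IsPaving ℰ) : Kpt ℰ ⊆ EStar ℰ := by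
  intro K hK
  letI t : TopologicalSpace E := TopologicalSpace.generateFrom ℰ
  have hopen : ∀ G ∈ ℰ, IsOpen G := fun G hG => TopologicalSpace.isOpen_generateFrom_of_mem hG
  have hKc : IsCompact K := hK
  constructor
  · have h1 : ∀ x : E, ∃ H, H ∈ ℰ ∧ x ∈ H := fun x => by
      obtain ⟨G, hG, hxG⟩ := (hpav.2 x).1
      exact ⟨G, hG, hxG⟩
    choose U hU hxU using h1
    obtain ⟨s, hs⟩ := hKc.elim_finite_subcover U (fun x => hopen _ (hU x))
      (fun x _ => Set.mem_iUnion.mpr ⟨x, hxU x⟩)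
    exact ⟨⋃ x ∈ s, U x, myPrepaving_biUnion hpav.1 s U (fun i _ => hU i), hs⟩
  · intro G hG hKG G' hG' hKG'
    have h2 : ∀ x : E, ∃ H, H ∈ ℰ ∧ H ⊆ G ∧ H ⊆ G' ∧ (x ∈ K → x ∈ H) := by
      intro x
      by_cases hx : x ∈ K
      · obtain ⟨H, hH, hxH, h1, h2⟩ := (hpav.2 x).2 G hG (hKG hx) G' hG' (hKG' hx)
        exact ⟨H, hH, h1, h2, fun _ => hxH⟩
      · exact ⟨∅, hpav.1.1, Set.empty_subset _, Set.empty_subset _, fun h => absurd h hx⟩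
    choose V hV hVG hVG' hxV using h2
    obtain ⟨s, hs⟩ := hKc.elim_finite_subcover V (fun x => hopen _ (hV x))
      (fun x hx => Set.mem_iUnion.mpr ⟨x, hxV x hx⟩)
    exact ⟨⋃ x ∈ s, V x, myPrepaving_biUnion hpav.1 s V (fun i _ => hV i), hs,
      Set.iUnion₂_subset (fun i _ => hVG i), Set.iUnion₂_subset (fun i _ => hVG' i)⟩

lemma myFilter_upclosure [PartialOrder L] {S : Set L} (hne : S.Nonempty)
    (hdir : ∀ x ∈ S, ∀ y ∈ S, ∃ z ∈ S, z ≤ x ∧ z ≤ y) :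
    IsFilterSet {z : L | ∃ s ∈ S, s ≤ z} ∧
      ∀ a : L, IsGLB S a → IsGLB {z : L | ∃ s ∈ S, s ≤ z} a := by
  constructor
  · refine ⟨?_, ?_, ?_⟩
    · obtain ⟨s, hs⟩ := hne
      exact ⟨s, s, hs, le_refl s⟩
    · rintro x ⟨sx, hsx, hsxx⟩ y ⟨sy, hsy, hsyy⟩
      obtain ⟨z, hz, hzx, hzy⟩ := hdir sx hsx sy hsy
      exact ⟨z, ⟨z, hz, le_refl z⟩, le_trans hzx hsxx, le_trans hzy hsyy⟩
    · rintro x ⟨s, hs, hsx⟩ y hxy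
      exact ⟨s, hs, le_trans hsx hxy⟩
  · intro a ha
    constructor
    · rintro z ⟨s, hs, hsz⟩
      exact le_trans (ha.1 hs) hsz
    · intro c hcb
      exact ha.2 (fun s hs => hcb ⟨s, hs, le_refl s⟩)

lemma myNuStar_sup [DistribLattice L] [OrderBot L] (hc : ContinuousPoset L)
    (hlc : LocallyComplete L) {ℰ : Set (Set E)} (hpre : IsPrepaving ℰ)
    {ν τ : Set E → L} (hν : IsMaxitive ℰ ν) (hτ : IsMaxitive ℰ τ)
    {A : Set E} (hA : A ∈ EStar ℰ) :
    nuStar ℰ (fun G => ν G ⊔ τ G) A = nuStar ℰ ν A ⊔ nuStar ℰ τ A := by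
  obtain ⟨⟨G0, hG0, hAG0⟩, hfil⟩ := hA
  have hG0mem : G0 ∈ {G ∈ ℰ | A ⊆ G} := ⟨hG0, hAG0⟩
  have hneν : (ν '' {G ∈ ℰ | A ⊆ G}).Nonempty := ⟨ν G0, G0, hG0mem, rfl⟩
  have hneτ : (τ '' {G ∈ ℰ | A ⊆ G}).Nonempty := ⟨τ G0, G0, hG0mem, rfl⟩
  obtain ⟨a, ha⟩ := myExists_isGLB hlc hneν
  obtain ⟨b, hb⟩ := myExists_isGLB hlc hneτ
  have hdirν : ∀ x ∈ ν '' {G ∈ ℰ | A ⊆ G}, ∀ y ∈ ν '' {G ∈ ℰ | A ⊆ G},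
      ∃ z ∈ ν '' {G ∈ ℰ | A ⊆ G}, z ≤ x ∧ z ≤ y := by
    rintro _ ⟨G1, ⟨hG1, hAG1⟩, rfl⟩ _ ⟨G2, ⟨hG2, hAG2⟩, rfl⟩
    obtain ⟨H, hH, hAH, h1, h2⟩ := hfil G1 hG1 hAG1 G2 hG2 hAG2
    exact ⟨ν H, ⟨H, ⟨hH, hAH⟩, rfl⟩, myMaxitive_mono hpre hν hH hG1 h1,
      myMaxitive_mono hpre hν hH hG2 h2⟩
  have hdirτ : ∀ x ∈ τ '' {G ∈ ℰ | A ⊆ G}, ∀ y ∈ τ '' {G ∈ ℰ | A ⊆ G},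
      ∃ z ∈ τ '' {G ∈ ℰ | A ⊆ G}, z ≤ x ∧ z ≤ y := by
    rintro _ ⟨G1, ⟨hG1, hAG1⟩, rfl⟩ _ ⟨G2, ⟨hG2, hAG2⟩, rfl⟩
    obtain ⟨H, hH, hAH, h1, h2⟩ := hfil G1 hG1 hAG1 G2 hG2 hAG2
    exact ⟨τ H, ⟨H, ⟨hH, hAH⟩, rfl⟩, myMaxitive_mono hpre hτ hH hG1 h1,
      myMaxitive_mono hpre hτ hH hG2 h2⟩
  obtain ⟨hFνfil, hFνglb⟩ := myFilter_upclosure hneν hdirν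
  obtain ⟨hFτfil, hFτglb⟩ := myFilter_upclosure hneτ hdirτ
  have hglb : IsGLB ((fun G => ν G ⊔ τ G) '' {G ∈ ℰ | A ⊆ G}) (a ⊔ b) := by
    constructor
    · rintro _ ⟨G, hGm, rfl⟩
      exact sup_le_sup (ha.1 ⟨G, hGm, rfl⟩) (hb.1 ⟨G, hGm, rfl⟩)
    · intro c hcb
      have step1 : ∀ G ∈ {G ∈ ℰ | A ⊆ G}, c ≤ ν G ⊔ b := by
        intro G hGm
        refine (myIsGLB_sup_of_filter hc hFτfil (hFτglb b hb) (ν G)).2 ?_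
        rintro _ ⟨z, ⟨_, ⟨G', hG'm, rfl⟩, htz⟩, rfl⟩
        obtain ⟨H, hH, hAH, h1, h2⟩ := hfil G hGm.1 hGm.2 G' hG'm.1 hG'm.2
        have hcH : c ≤ ν H ⊔ τ H := hcb ⟨H, ⟨hH, hAH⟩, rfl⟩
        exact le_trans hcH (sup_le_sup (myMaxitive_mono hpre hν hH hGm.1 h1)
          (le_trans (myMaxitive_mono hpre hτ hH hG'm.1 h2) htz))
      have step2 : c ≤ b ⊔ a := by
        refine (myIsGLB_sup_of_filter hc hFνfil (hFνglb a ha) b).2 ?_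
        rintro _ ⟨z, ⟨_, ⟨G, hGm, rfl⟩, hnz⟩, rfl⟩
        exact le_trans (step1 G hGm) (le_trans (by rw [sup_comm]) (sup_le_sup_left hnz b))
      rw [sup_comm]
      exact step2
  rw [nuStar, nuStar, nuStar, myPInf_eq hglb, myPInf_eq ha, myPInf_eq hb]

lemma myNuStar_le [PartialOrder L] [OrderBot L] (hlc : LocallyComplete L)
    {ℰ : Set (Set E)} {ν : Set E → L} {K G : Set E} (hG : G ∈ ℰ) (hKG : K ⊆ G) :
    nuStar ℰ ν K ≤ ν G := by
  have hne : (ν '' {G' ∈ ℰ | K ⊆ G'}).Nonempty := ⟨ν G, G, ⟨hG, hKG⟩, rfl⟩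
  obtain ⟨a, ha⟩ := myExists_isGLB hlc hne
  rw [nuStar, myPInf_eq ha]
  exact ha.1 ⟨G, ⟨hG, hKG⟩, rfl⟩

lemma myRegPart_sup [DistribLattice L] [OrderBot L] (hc : ContinuousPoset L)
    (hlc : LocallyComplete L) {ℰ : Set (Set E)} (hpav : IsPaving ℰ)
    {ν τ : Set E → L} (hν : IsMaxitive ℰ ν) (hτ : IsMaxitive ℰ τ)
    {G : Set E} (hG : G ∈ ℰ) :
    regPart ℰ (fun G => ν G ⊔ τ G) G = regPart ℰ ν G ⊔ regPart ℰ τ G := by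
  have hbddν : BddAbove (nuStar ℰ ν '' {K ∈ Kpt ℰ | K ⊆ G}) := by
    refine ⟨ν G, ?_⟩
    rintro _ ⟨K, ⟨hK, hKG⟩, rfl⟩
    exact myNuStar_le hlc hG hKG
  have hbddτ : BddAbove (nuStar ℰ τ '' {K ∈ Kpt ℰ | K ⊆ G}) := by
    refine ⟨τ G, ?_⟩
    rintro _ ⟨K, ⟨hK, hKG⟩, rfl⟩
    exact myNuStar_le hlc hG hKG
  obtain ⟨a, ha⟩ := hlc _ hbddν
  obtain ⟨b, hb⟩ := hlc _ hbddτ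
  have himg : nuStar ℰ (fun G => ν G ⊔ τ G) '' {K ∈ Kpt ℰ | K ⊆ G}
      = (fun K => nuStar ℰ ν K ⊔ nuStar ℰ τ K) '' {K ∈ Kpt ℰ | K ⊆ G} := by
    apply Set.image_congr
    intro K hK
    exact myNuStar_sup hc hlc hpav.1 hν hτ (myKpt_subset_estar hpav hK.1)
  have hglb := myIsLUB_image_sup ha hb
  rw [regPart, regPart, regPart, himg, myPSup_eq hglb, myPSup_eq ha, myPSup_eq hb]

end MyAux
/-- calculus rules: `ν ⊕ τ` is maxitive, `⌊ν ⊕ τ⌋ = ⌊ν⌋ ⊕ ⌊τ⌋`,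
`(ν ⊕ τ)* = ν* ⊕ τ*` on `ℰ*`, and `⊥(ν ⊕ τ) ≤ ⊥ν ⊕ ⊥τ`. -/
theorem calculus_rules_join [DistribLattice L] [OrderBot L]
    (hc : ContinuousPoset L) (hlc : LocallyComplete L)
    (ℰ : Set (Set E)) (hpav : IsPaving ℰ)
    (ν τ : Set E → L) (hν : IsMaxitive ℰ ν) (hτ : IsMaxitive ℰ τ)
    (rν rτ rs : Set E → L)
    (hrν : IsResidualPart ℰ ν rν) (hrτ : IsResidualPart ℰ τ rτ)
    (hrs : IsResidualPart ℰ (fun G => ν G ⊔ τ G) rs) :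
    IsMaxitive ℰ (fun G => ν G ⊔ τ G) ∧
    (∀ G ∈ ℰ, regPart ℰ (fun G => ν G ⊔ τ G) G = regPart ℰ ν G ⊔ regPart ℰ τ G) ∧
    (∀ A ∈ EStar ℰ, nuStar ℰ (fun G => ν G ⊔ τ G) A = nuStar ℰ ν A ⊔ nuStar ℰ τ A) ∧
    ∀ G ∈ ℰ, rs G ≤ rν G ⊔ rτ G := by
  have hreg : ∀ G ∈ ℰ, regPart ℰ (fun G => ν G ⊔ τ G) G = regPart ℰ ν G ⊔ regPart ℰ τ G :=
    fun G hG => myRegPart_sup hc hlc hpav hν hτ hG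
  refine ⟨myMaxitive_sup hν hτ, hreg,
    fun A hA => myNuStar_sup hc hlc hpav.1 hν hτ hA, ?_⟩
  refine hrs.2.2 _ (myMaxitive_sup hrν.1 hrτ.1) ?_
  intro G hG
  show ν G ⊔ τ G = regPart ℰ (fun G => ν G ⊔ τ G) G ⊔ (rν G ⊔ rτ G)
  rw [hreg G hG, hrν.2.1 G hG, hrτ.2.1 G hG]
  exact sup_sup_sup_comm _ _ _ _
end

section
/- If ℰ is a Boolean algebra on E (a paving closed under complementation) and L is a locally continuous frame, then every tight L-valued maxitive measure ν on ℰ has a cardinal density: there exists c : E → L such that ν(G) = ⊕_{x ∈ G} c(x) for all G ∈ ℰ. -/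
open Set

variable {E L : Type*}

lemma exists_isGLB_of_locallyComplete [PartialOrder L] [OrderBot L]
    (hlc : LocallyComplete L) {S : Set L} (hS : S.Nonempty) : ∃ a, IsGLB S a := by
  obtain ⟨s, hs⟩ := hS
  obtain ⟨a, ha⟩ := hlc (lowerBounds S) ⟨s, fun l hl => hl hs⟩
  exact ⟨a, fun t ht => ha.2 (fun l hl => hl ht), fun l hl => ha.1 hl⟩

lemma pInf_isGLB [PartialOrder L] [OrderBot L] {S : Set L} (h : ∃ a, IsGLB S a) :
    IsGLB S (pInf S) := by
  rw [pInf, dif_pos h]; exact h.choose_spec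

lemma maxitive_mono [PartialOrder L] [OrderBot L] {ℰ : Set (Set E)} {ν : Set E → L}
    (hν : IsMaxitive ℰ ν) {A B : Set E} (hA : A ∈ ℰ) (hB : B ∈ ℰ) (hAB : A ⊆ B) :
    ν A ≤ ν B := by
  classical
  have hU : ⋃₀ (({A, B} : Finset (Set E)) : Set (Set E)) = B := by
    simp [Set.union_eq_right.2 hAB]
  have hmem : ∀ G ∈ ({A, B} : Finset (Set E)), G ∈ ℰ := by
    intro G hG
    rcases Finset.mem_insert.1 hG with h | h
    · exact h ▸ hA
    · exact (Finset.mem_singleton.1 h) ▸ hB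
  have h := hν.2 {A, B} hmem (by rw [hU]; exact hB)
  rw [hU] at h
  exact h.1 ⟨A, by simp, rfl⟩

lemma sUnion_finset_mem {ℰ : Set (Set E)} (hpre : IsPrepaving ℰ) (t : Finset (Set E))
    (ht : ∀ A ∈ t, A ∈ ℰ) : ⋃₀ (t : Set (Set E)) ∈ ℰ := by
  classical
  induction t using Finset.induction_on with
  | empty => simpa using hpre.1
  | @insert A s hAs ih =>
      have : ⋃₀ ((insert A s : Finset (Set E)) : Set (Set E)) = A ∪ ⋃₀ (s : Set (Set E)) := by
        simp
      rw [this]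
      exact hpre.2 A (ht A (Finset.mem_insert_self A s)) _
        (ih (fun B hB => ht B (Finset.mem_insert_of_mem hB)))

/-- on a Boolean algebra over a locally continuous frame, every
tight maxitive measure has a cardinal density. -/
theorem tight_maxitive_has_density [DistribLattice L] [OrderBot L]
    (hc : ContinuousPoset L) (hlc : LocallyComplete L)
    (ℰ : Set (Set E)) (hpav : IsPaving ℰ) (hbool : ∀ G ∈ ℰ, Gᶜ ∈ ℰ)
    (ν : Set E → L) (hν : IsMaxitive ℰ ν)
    (htight : IsGLB ((fun H : Set E => ν Hᶜ) '' Hcf ℰ) ⊥) :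
    ∃ c : E → L, ∀ G ∈ ℰ, IsLUB (c '' G) (ν G) := by
  classical
  letI : TopologicalSpace E := TopologicalSpace.generateFrom ℰ
  have hunivℰ : (univ : Set E) ∈ ℰ := by
    have := hbool ∅ hpav.1.1; simpa using this
  have hinter : ∀ A ∈ ℰ, ∀ B ∈ ℰ, A ∩ B ∈ ℰ := by
    intro A hA B hB
    have := hbool _ (hpav.1.2 _ (hbool A hA) _ (hbool B hB))
    simpa [Set.compl_union] using this
  -- the candidate density
  set c : E → L := fun x => nuStar ℰ ν {x} with hcdef
  set D : E → Set L := fun x => ν '' {G' ∈ ℰ | ({x} : Set E) ⊆ G'} with hDdef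
  have hDne : ∀ x : E, (D x).Nonempty :=
    fun x => ⟨ν univ, ⟨univ, ⟨hunivℰ, subset_univ _⟩, rfl⟩⟩
  have hcglb : ∀ x : E, IsGLB (D x) (c x) := by
    intro x
    exact pInf_isGLB (exists_isGLB_of_locallyComplete hlc (hDne x))
  -- ∅ belongs to ℋ, and ℋ is stable under union
  have hEStar : ∀ A : Set E, A ∈ EStar ℰ := by
    intro A
    refine ⟨⟨univ, hunivℰ, subset_univ _⟩, ?_⟩
    intro G hG hAG G' hG' hAG'
    exact ⟨G ∩ G', hinter G hG G' hG', subset_inter hAG hAG',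
      inter_subset_left, inter_subset_right⟩
  have hemptyH : (∅ : Set E) ∈ Hcf ℰ := by
    refine ⟨isCompact_empty, hEStar ∅, ?_⟩
    simpa using hunivℰ
  have hHmem : ∀ H ∈ Hcf ℰ, H ∈ ℰ := by
    intro H hH
    have := hbool _ hH.2.2
    simpa using this
  have hHunion : ∀ H₁ ∈ Hcf ℰ, ∀ H₂ ∈ Hcf ℰ, H₁ ∪ H₂ ∈ Hcf ℰ := by
    intro H₁ h₁ H₂ h₂
    refine ⟨h₁.1.union h₂.1, hEStar _, ?_⟩
    rw [Set.compl_union]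
    exact hinter _ h₁.2.2 _ h₂.2.2
  -- the tightness filter
  set S₀ : Set L := (fun H : Set E => ν Hᶜ) '' Hcf ℰ with hS₀def
  set F₀ : Set L := {y | ∃ s ∈ S₀, s ≤ y} with hF₀def
  have hS₀F₀ : S₀ ⊆ F₀ := fun s hs => ⟨s, hs, le_rfl⟩
  have hF₀filter : IsFilterSet F₀ := by
    refine ⟨⟨ν (∅ : Set E)ᶜ, hS₀F₀ ⟨∅, hemptyH, rfl⟩⟩, ?_, ?_⟩
    · rintro x ⟨s, ⟨H₁, hH₁, rfl⟩, hsx⟩ y ⟨u, ⟨H₂, hH₂, rfl⟩, huy⟩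
      have hmem : H₁ ∪ H₂ ∈ Hcf ℰ := hHunion _ hH₁ _ hH₂
      refine ⟨ν (H₁ ∪ H₂)ᶜ, hS₀F₀ ⟨H₁ ∪ H₂, hmem, rfl⟩, ?_, ?_⟩
      · exact le_trans (maxitive_mono hν (hbool _ (hHmem _ hmem))
          (hbool _ (hHmem _ hH₁)) (compl_subset_compl.2 subset_union_left)) hsx
      · exact le_trans (maxitive_mono hν (hbool _ (hHmem _ hmem))
          (hbool _ (hHmem _ hH₂)) (compl_subset_compl.2 subset_union_right)) huy
    · rintro x ⟨s, hs, hsx⟩ y hxy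
      exact ⟨s, hs, le_trans hsx hxy⟩
  have hF₀glb : IsGLB F₀ (⊥ : L) := by
    constructor
    · exact fun y _ => bot_le
    · intro l hl
      exact htight.2 (fun s hs => hl (hS₀F₀ hs))
  refine ⟨c, fun G hG => ?_⟩
  constructor
  · -- upper bound
    rintro v ⟨x, hxG, rfl⟩
    exact (hcglb x).1 ⟨G, ⟨hG, singleton_subset_iff.2 hxG⟩, rfl⟩
  · -- least upper bound
    intro b hb
    -- it suffices to show ν G ≤ w for every w way-above b
    refine (hc b).2.2 ?_
    intro w hw
    -- Step A: find H ∈ ℋ with ν Hᶜ ≤ w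
    obtain ⟨s, ⟨H, hHcf, rfl⟩, hsw⟩ : w ∈ F₀ := hw F₀ hF₀filter ⊥ hF₀glb bot_le
    have hHℰ : H ∈ ℰ := hHmem _ hHcf
    -- Step C: for each x ∈ G find Gx ∈ ℰ containing x with ν Gx ≤ w
    have hstepC : ∀ x ∈ G, ∃ Gx, Gx ∈ ℰ ∧ x ∈ Gx ∧ ν Gx ≤ w := by
      intro x hxG
      have hcxb : c x ≤ b := hb ⟨x, hxG, rfl⟩
      -- the filter generated by D x
      set Fx : Set L := {y | ∃ s ∈ D x, s ≤ y} with hFxdef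
      have hDxFx : D x ⊆ Fx := fun s hs => ⟨s, hs, le_rfl⟩
      have hFxfilter : IsFilterSet Fx := by
        refine ⟨((hDne x).mono hDxFx), ?_, ?_⟩
        · rintro u ⟨s, ⟨G₁, ⟨hG₁, hx₁⟩, rfl⟩, hsu⟩ v ⟨r, ⟨G₂, ⟨hG₂, hx₂⟩, rfl⟩, hrv⟩
          have h12 : G₁ ∩ G₂ ∈ ℰ := hinter _ hG₁ _ hG₂
          refine ⟨ν (G₁ ∩ G₂), hDxFx ⟨G₁ ∩ G₂, ⟨h12, subset_inter hx₁ hx₂⟩, rfl⟩, ?_, ?_⟩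
          · exact le_trans (maxitive_mono hν h12 hG₁ inter_subset_left) hsu
          · exact le_trans (maxitive_mono hν h12 hG₂ inter_subset_right) hrv
        · rintro u ⟨s, hs, hsu⟩ v huv
          exact ⟨s, hs, le_trans hsu huv⟩
      have hFxglb : IsGLB Fx (c x) := by
        constructor
        · rintro y ⟨s, hs, hsy⟩
          exact le_trans ((hcglb x).1 hs) hsy
        · intro l hl
          exact (hcglb x).2 (fun s hs => hl (hDxFx hs))
      obtain ⟨s, ⟨Gx, ⟨hGxℰ, hxGx⟩, rfl⟩, hsw'⟩ : w ∈ Fx :=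
        hw Fx hFxfilter (c x) hFxglb hcxb
      exact ⟨Gx, hGxℰ, singleton_subset_iff.1 hxGx, hsw'⟩
    choose! Gx hGxℰ hxGx hνGx using hstepC
    -- Step D: compactness of H gives a finite subcover of G ∩ H
    set U : E → Set E := fun x => if x ∈ G then Gx x else Gᶜ with hUdef
    have hUℰ : ∀ x, U x ∈ ℰ := by
      intro x
      by_cases hx : x ∈ G
      · simpa [hUdef, hx] using hGxℰ x hx
      · simpa [hUdef, hx] using hbool G hG
    have hUopen : ∀ x, IsOpen (U x) :=
      fun x => TopologicalSpace.GenerateOpen.basic _ (hUℰ x)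
    have hHcover : H ⊆ ⋃ x, U x := by
      intro y hy
      by_cases hyG : y ∈ G
      · exact mem_iUnion.2 ⟨y, by simp [hUdef, hyG, hxGx y hyG]⟩
      · exact mem_iUnion.2 ⟨y, by simp [hUdef, hyG]⟩
    obtain ⟨t, ht⟩ := hHcf.1.elim_finite_subcover U hUopen hHcover
    -- Step E: bound ν (G ∩ H)
    set W : E → Set E := fun x => if x ∈ G then Gx x else ∅ with hWdef
    have hWℰ : ∀ x, W x ∈ ℰ := by
      intro x
      by_cases hx : x ∈ G
      · simpa [hWdef, hx] using hGxℰ x hx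
      · simpa [hWdef, hx] using hpav.1.1
    have hνW : ∀ x, ν (W x) ≤ w := by
      intro x
      by_cases hx : x ∈ G
      · simpa [hWdef, hx] using hνGx x hx
      · simp [hWdef, hx, hν.1]
    set V : Finset (Set E) := t.image W with hVdef
    have hVℰ : ∀ A ∈ V, A ∈ ℰ := by
      intro A hA
      obtain ⟨x, _, rfl⟩ := Finset.mem_image.1 hA
      exact hWℰ x
    have hVU : ⋃₀ (V : Set (Set E)) ∈ ℰ := sUnion_finset_mem hpav.1 V hVℰ
    have hGHsub : G ∩ H ⊆ ⋃₀ (V : Set (Set E)) := by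
      rintro z ⟨hzG, hzH⟩
      obtain ⟨x, hxt, hzU⟩ := mem_iUnion₂.1 (ht hzH)
      by_cases hx : x ∈ G
      · refine ⟨W x, ?_, ?_⟩
        · exact Finset.mem_coe.2 (Finset.mem_image.2 ⟨x, hxt, rfl⟩)
        · simpa [hWdef, hx] using (by simpa [hUdef, hx] using hzU : z ∈ Gx x)
      · exact absurd hzG (by simpa [hUdef, hx] using hzU)
    have hGHℰ : G ∩ H ∈ ℰ := hinter _ hG _ hHℰ
    have hνGH : ν (G ∩ H) ≤ w := by
      refine le_trans (maxitive_mono hν hGHℰ hVU hGHsub) ?_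
      have hlub := hν.2 V hVℰ hVU
      refine hlub.2 ?_
      rintro v ⟨A, hA, rfl⟩
      obtain ⟨x, _, rfl⟩ := Finset.mem_image.1 (Finset.mem_coe.1 hA)
      exact hνW x
    -- Step F: combine
    have hGHcℰ : G ∩ Hᶜ ∈ ℰ := hinter _ hG _ (hbool _ hHℰ)
    have hνGHc : ν (G ∩ Hᶜ) ≤ w :=
      le_trans (maxitive_mono hν hGHcℰ (hbool _ hHℰ) inter_subset_right) hsw
    have hsplit : ⋃₀ (({G ∩ H, G ∩ Hᶜ} : Finset (Set E)) : Set (Set E)) = G := by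
      simp [Set.inter_union_compl]
    have hmem : ∀ A ∈ ({G ∩ H, G ∩ Hᶜ} : Finset (Set E)), A ∈ ℰ := by
      intro A hA
      rcases Finset.mem_insert.1 hA with h | h
      · exact h ▸ hGHℰ
      · exact (Finset.mem_singleton.1 h) ▸ hGHcℰ
    have hlub := hν.2 {G ∩ H, G ∩ Hᶜ} hmem (by rw [hsplit]; exact hG)
    rw [hsplit] at hlub
    refine hlub.2 ?_
    rintro v ⟨A, hA, rfl⟩
    rcases Finset.mem_insert.1 (Finset.mem_coe.1 hA) with h | h
    · exact h ▸ hνGH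
    · exact (Finset.mem_singleton.1 h) ▸ hνGHc
end
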